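/- Let A = -i(I_{1z}I_{2x} + I_{2x}I_{3z}) and B = -i(I_{1z}I_{2y} + I_{2y}I_{3z}) in the three-spin system. Then for all real θ: exp((π/2)A) exp((θ/2)B) exp(-(π/2)A) = exp(-iθ(I_{1z}I_{2z}I_{3z} + I_{2z}/4)). -/

import Mathlib

open Matrix NormedSpace Real
open scoped Matrix Kronecker

noncomputable section

def Ix : Matrix (Fin 2) (Fin 2) ℂ := (1/2 : ℂ) • !![0, 1; 1, 0]
def Iy : Matrix (Fin 2) (Fin 2) ℂ := (1/2 : ℂ) • !![0, -Complex.I; Complex.I, 0]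
def Iz : Matrix (Fin 2) (Fin 2) ℂ := (1/2 : ℂ) • !![1, 0; 0, -1]

abbrev Spin3 := Matrix (Fin 2 × Fin 2 × Fin 2) (Fin 2 × Fin 2 × Fin 2) ℂ

/-- The operator acting as `P`, `Q`, `R` on the three tensor factors of `(ℂ²)⊗³`. -/
def triple (P Q R : Matrix (Fin 2) (Fin 2) ℂ) : Spin3 := P ⊗ₖ (Q ⊗ₖ R)

def I1x : Spin3 := triple Ix 1 1
def I1y : Spin3 := triple Iy 1 1
def I1z : Spin3 := triple Iz 1 1
def I2x : Spin3 := triple 1 Ix 1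
def I2y : Spin3 := triple 1 Iy 1
def I2z : Spin3 := triple 1 Iz 1
def I3x : Spin3 := triple 1 1 Ix
def I3y : Spin3 := triple 1 1 Iy
def I3z : Spin3 := triple 1 1 Iz


/-!
The operators `J₁ = -4i I_{1z}I_{2x}` and `J₂ = -4i I_{2x}I_{3z}` are commuting square roots
of `-1`, and `π A = (π/4)(J₁ + J₂)`. Since `A` anticommutes with `B`, conjugating `B` by
`exp((π/2)A)` multiplies it by `exp(π A) = exp((π/4)J₁) exp((π/4)J₂)`; as `J₂ B = J₁ B`, the
second factor may be traded for `exp((π/4)J₁)`, leaving `exp((π/2)J₁) B = J₁ B`, which is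
`-2i(I_{1z}I_{2z}I_{3z} + I_{2z}/4)`. Conjugation commutes with `exp`.
-/

section BanachAlgebra

variable {𝔸 : Type*} [NormedRing 𝔸]

theorem exp_mul_exp_mul_exp_neg [NormedAlgebra ℚ 𝔸] [CompleteSpace 𝔸] (X Y : 𝔸) :
    exp X * exp Y * exp (-X) = exp (exp X * Y * exp (-X)) := by
  let := invertibleExp X
  simpa [← invOf_exp] using (exp_units_conj (unitOfInvertible (exp X)) Y).symm

theorem exp_mul_mul_exp_neg_of_anticommute [NormedAlgebra ℚ 𝔸] [CompleteSpace 𝔸] {X B : 𝔸}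
    (h : X * B = -(B * X)) : exp X * B * exp (-X) = exp ((2 : ℕ) • X) * B := by
  have hB : SemiconjBy B (-X) X := by simp [SemiconjBy, h]
  rw [mul_assoc, hB.exp_right, ← mul_assoc, NormedSpace.exp_nsmul, sq]

theorem exp_smul_eq_cos_add_sin [NormedAlgebra ℝ 𝔸] [Algebra ℚ 𝔸] {J : 𝔸} (hJ : J * J = -1)
    (x : ℝ) : exp (x • J) = Real.cos x • 1 + Real.sin x • J := by
  let φ := Complex.liftAux J hJ
  have hφ := map_exp φ φ.toLinearMap.continuous_of_finiteDimensional (x * Complex.I)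
  rw [← Complex.exp_eq_exp_ℂ, Complex.exp_mul_I] at hφ
  simpa [φ, Complex.liftAux_apply, ← Complex.ofReal_cos, ← Complex.ofReal_sin,
    Algebra.algebraMap_eq_smul_one] using hφ.symm

theorem exp_pi_div_two_smul [NormedAlgebra ℝ 𝔸] [Algebra ℚ 𝔸] {J : 𝔸} (hJ : J * J = -1) :
    exp ((π / 2) • J) = J := by
  simp [exp_smul_eq_cos_add_sin hJ]

theorem exp_smul_mul_eq_of_mul_eq [NormedAlgebra ℝ 𝔸] [Algebra ℚ 𝔸] {J J' B : 𝔸}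
    (hJ : J * J = -1) (hJ' : J' * J' = -1) (h : J' * B = J * B) (x : ℝ) :
    exp (x • J') * B = exp (x • J) * B := by
  simp only [exp_smul_eq_cos_add_sin hJ, exp_smul_eq_cos_add_sin hJ', add_mul, smul_mul_assoc, h]

end BanachAlgebra

theorem Ix_mul_Ix : Ix * Ix = (1/4 : ℂ) • 1 := by
  ext i j; fin_cases i <;> fin_cases j <;> simp [Ix, mul_apply, one_apply] <;> norm_num

theorem Iz_mul_Iz : Iz * Iz = (1/4 : ℂ) • 1 := by
  ext i j; fin_cases i <;> fin_cases j <;> simp [Iz, mul_apply, one_apply] <;> norm_num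

theorem Ix_mul_Iy : Ix * Iy = (Complex.I / 2) • Iz := by
  ext i j; fin_cases i <;> fin_cases j <;> simp [Ix, Iy, Iz, mul_apply] <;> ring

theorem Iy_mul_Ix : Iy * Ix = (-Complex.I / 2) • Iz := by
  ext i j; fin_cases i <;> fin_cases j <;> simp [Ix, Iy, Iz, mul_apply] <;> ring

theorem triple_mul_triple (P Q R P' Q' R' : Matrix (Fin 2) (Fin 2) ℂ) :
    triple P Q R * triple P' Q' R' = triple (P * P') (Q * Q') (R * R') := by
  simp [triple, ← mul_kronecker_mul]

theorem triple_one_one_one : triple 1 1 1 = 1 := by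
  simp [triple]

theorem triple_smul_left (c : ℂ) (P Q R : Matrix (Fin 2) (Fin 2) ℂ) :
    triple (c • P) Q R = c • triple P Q R := by
  simp [triple, smul_kronecker]

theorem triple_smul_middle (c : ℂ) (P Q R : Matrix (Fin 2) (Fin 2) ℂ) :
    triple P (c • Q) R = c • triple P Q R := by
  simp [triple, smul_kronecker, kronecker_smul]

theorem triple_smul_right (c : ℂ) (P Q R : Matrix (Fin 2) (Fin 2) ℂ) :
    triple P Q (c • R) = c • triple P Q R := by
  simp [triple, kronecker_smul]

def opA : Spin3 := (-Complex.I) • (I1z * I2x + I2x * I3z)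
def opB : Spin3 := (-Complex.I) • (I1z * I2y + I2y * I3z)
def opJ₁ : Spin3 := (-4 * Complex.I) • (I1z * I2x)
def opJ₂ : Spin3 := (-4 * Complex.I) • (I2x * I3z)

theorem opJ₁_mul_self : opJ₁ * opJ₁ = -1 := by
  simp only [opJ₁, I1z, I2x, triple_mul_triple, smul_mul_assoc, mul_smul_comm, smul_smul, mul_one,
    one_mul, Ix_mul_Ix, Iz_mul_Iz, triple_smul_left, triple_smul_middle, triple_one_one_one]
  match_scalars; ring_nf; simp [Complex.I_sq]

theorem opJ₂_mul_self : opJ₂ * opJ₂ = -1 := by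
  simp only [opJ₂, I3z, I2x, triple_mul_triple, smul_mul_assoc, mul_smul_comm, smul_smul, mul_one,
    one_mul, Ix_mul_Ix, Iz_mul_Iz, triple_smul_middle, triple_smul_right, triple_one_one_one]
  match_scalars; ring_nf; simp [Complex.I_sq]

theorem commute_opJ₁_opJ₂ : Commute opJ₁ opJ₂ := by
  simp [Commute, SemiconjBy, opJ₁, opJ₂, I1z, I3z, I2x, triple_mul_triple]

theorem opA_mul_opB : opA * opB = -(opB * opA) := by
  simp only [opA, opB, I1z, I3z, I2x, I2y, triple_mul_triple, smul_mul_assoc, mul_smul_comm,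
    mul_add, add_mul, smul_add, smul_smul, mul_one, one_mul, Iz_mul_Iz, Ix_mul_Iy, Iy_mul_Ix,
    triple_smul_left, triple_smul_middle, triple_smul_right]
  module

theorem opJ₂_mul_opB : opJ₂ * opB = opJ₁ * opB := by
  simp only [opJ₁, opJ₂, opB, I1z, I3z, I2x, I2y, triple_mul_triple, smul_mul_assoc,
    mul_smul_comm, mul_add, smul_add, smul_smul, mul_one, one_mul, Iz_mul_Iz, Ix_mul_Iy,
    triple_smul_left, triple_smul_middle, triple_smul_right]
  module

theorem opJ₁_mul_opB : opJ₁ * opB = (-2 * Complex.I) • (I1z * I2z * I3z + (1/4 : ℂ) • I2z) := by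
  simp only [opJ₁, opB, I1z, I2z, I3z, I2x, I2y, triple_mul_triple, smul_mul_assoc, mul_smul_comm,
    mul_add, smul_add, smul_smul, mul_one, one_mul, Iz_mul_Iz, Ix_mul_Iy, triple_smul_left,
    triple_smul_middle]
  match_scalars <;> ring_nf <;> rw [Complex.I_pow_three] <;> ring

theorem two_nsmul_pi_div_two_smul_opA :
    (2 : ℕ) • ((π / 2 : ℂ) • opA) = (π / 4 : ℝ) • opJ₁ + (π / 4 : ℝ) • opJ₂ := by
  simp only [opA, opJ₁, opJ₂, ← Complex.coe_smul]
  push_cast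
  module

theorem exp_opA_mul_opB_mul_exp_neg_opA :
    exp ((π / 2 : ℂ) • opA) * opB * exp (-((π / 2 : ℂ) • opA)) = opJ₁ * opB := by
  have h_anti : exp ((π / 2 : ℂ) • opA) * opB * exp (-((π / 2 : ℂ) • opA)) =
      exp ((2 : ℕ) • ((π / 2 : ℂ) • opA)) * opB := by
    -- any normed-ring structure inducing the entrywise topology serves; `exp` does not see it
    open scoped Matrix.Norms.Operator in
    exact exp_mul_mul_exp_neg_of_anticommute (by simp [opA_mul_opB])
  have h_swap : exp ((π / 4 : ℝ) • opJ₂) * opB = exp ((π / 4 : ℝ) • opJ₁) * opB := by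
    open scoped Matrix.Norms.Operator in
    exact exp_smul_mul_eq_of_mul_eq opJ₁_mul_self opJ₂_mul_self opJ₂_mul_opB _
  have h_pi : exp ((π / 2 : ℝ) • opJ₁) = opJ₁ := by
    open scoped Matrix.Norms.Operator in
    exact exp_pi_div_two_smul opJ₁_mul_self
  rw [h_anti, two_nsmul_pi_div_two_smul_opA,
    Matrix.exp_add_of_commute _ _ ((commute_opJ₁_opJ₂.smul_left _).smul_right _), mul_assoc,
    h_swap, ← mul_assoc, ← Matrix.exp_add_of_commute _ _ (Commute.refl _), ← add_smul,
    show π / 4 + π / 4 = π / 2 by ring, h_pi]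

theorem trilinear_conjugation_AB (θ : ℝ) :
    let A : Spin3 := (-Complex.I) • (I1z * I2x + I2x * I3z)
    let B : Spin3 := (-Complex.I) • (I1z * I2y + I2y * I3z)
    exp (((Real.pi : ℂ) / 2) • A) * exp (((θ : ℂ) / 2) • B) *
        exp ((-(Real.pi : ℂ) / 2) • A) =
      exp ((-((θ : ℂ) * Complex.I)) • (I1z * I2z * I3z + (1/4 : ℂ) • I2z)) := by
  show exp ((π / 2 : ℂ) • opA) * exp ((θ / 2 : ℂ) • opB) * exp ((-π / 2 : ℂ) • opA) = _
  have h_conj : exp ((π / 2 : ℂ) • opA) * exp ((θ / 2 : ℂ) • opB) * exp (-((π / 2 : ℂ) • opA)) =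
      exp (exp ((π / 2 : ℂ) • opA) * ((θ / 2 : ℂ) • opB) * exp (-((π / 2 : ℂ) • opA))) := by
    open scoped Matrix.Norms.Operator in
    exact exp_mul_exp_mul_exp_neg _ _
  rw [neg_div, neg_smul, h_conj, mul_smul_comm, smul_mul_assoc, exp_opA_mul_opB_mul_exp_neg_opA,
    opJ₁_mul_opB, smul_smul]
  congr 2
  ring
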